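/- Let 1 ≤ k ≤ n−1 and let I_k = (x_{k+1}, …, x_n) be the ideal of A generated by the last n−k variables. Then L_k = { D ∈ W_n : D(I_k) ⊆ I_k } is a maximal subalgebra of the Lie algebra W_n: L_k is a proper Lie subalgebra of W_n and no Lie subalgebra L satisfies L_k ⊊ L ⊊ W_n. -/

import Mathlib

/-!
The stabilizer `L` of `I = (xᵢ : i ∈ s)`, here `s = {k+1, …, n}`, contains `f • ∂ᵢ` for every
`i ∉ s` and every `f • E` with `f ∈ I`. If a Lie subalgebra `M ⊋ L` contains `D` with `D xⱼ ∉ I`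
(`j ∈ s`), then bracketing `D` with `(xⱼ b) • E ∈ L` puts `(b · D xⱼ) • E` into `M`. Reducing
`D xⱼ` modulo `I` leaves a nonzero polynomial in the variables outside `s`; brackets with the
`∂ᵢ ∈ L`, `i ∉ s`, differentiate it, and in characteristic zero this reaches a nonzero constant,
so `∂ⱼ ∈ M`. Then `(b · ∂ⱼ xⱼ) • ∂ᵢ = b • ∂ᵢ ∈ M` for all `i ∈ s`, and these together with `L`
span all derivations.
-/

open MvPolynomial

/-- `Wn K n` is the Lie algebra of all `K`-derivations of `K[x_1, …, x_n]`. -/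
abbrev Wn (K : Type) [Field K] (n : ℕ) :=
  Derivation K (MvPolynomial (Fin n) K) (MvPolynomial (Fin n) K)

namespace Derivation

variable {R A : Type*} [CommRing R] [CommRing A] [Algebra R A]

lemma lie_smul_eq (D E : Derivation R A A) (a : A) :
    ⁅D, a • E⁆ = a • ⁅D, E⁆ + D a • E := by
  ext x
  simp only [commutator_apply, smul_apply, add_apply, smul_eq_mul, leibniz]
  ring

variable (R) in
def idealStabilizer (I : Ideal A) : LieSubalgebra R (Derivation R A A) where
  carrier := {D | ∀ f ∈ I, D f ∈ I}
  add_mem' hD hE f hf := add_mem (hD f hf) (hE f hf)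
  zero_mem' _ _ := zero_mem _
  smul_mem' c _ hD f hf := Submodule.smul_of_tower_mem I c (hD f hf)
  lie_mem' {D E} hD hE f hf := by
    rw [commutator_apply]
    exact sub_mem (hD _ (hE f hf)) (hE _ (hD f hf))

variable {I : Ideal A}

lemma mem_idealStabilizer_span_iff {s : Set A} {D : Derivation R A A} :
    D ∈ idealStabilizer R (Ideal.span s) ↔ ∀ x ∈ s, D x ∈ Ideal.span s := by
  refine ⟨fun hD x hx => hD x (Ideal.subset_span hx), fun hs f hf => ?_⟩
  induction hf using Submodule.span_induction with
  | mem x hx => exact hs x hx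
  | zero => simp
  | add x y _ _ hx hy => rw [map_add]; exact add_mem hx hy
  | smul a x hx' hx =>
    rw [smul_eq_mul, leibniz, smul_eq_mul, smul_eq_mul]
    exact add_mem (Ideal.mul_mem_left _ _ hx) (Ideal.mul_mem_right _ _ hx')

lemma smul_mem_idealStabilizer {a : A} (ha : a ∈ I) (D : Derivation R A A) :
    a • D ∈ idealStabilizer R I := fun f _ => by
  rw [smul_apply, smul_eq_mul]
  exact Ideal.mul_mem_right _ _ ha

lemma mul_apply_smul_mem_of_idealStabilizer_le {M : LieSubalgebra R (Derivation R A A)}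
    (hM : idealStabilizer R I ≤ M) {D : Derivation R A A} (hD : D ∈ M) {a : A} (ha : a ∈ I)
    (b : A) (E : Derivation R A A) : (b * D a) • E ∈ M := by
  have hba : b * a ∈ I := Ideal.mul_mem_left _ _ ha
  have hlie : ⁅D, (b * a) • E⁆ ∈ M := M.lie_mem hD (hM (smul_mem_idealStabilizer hba E))
  have hdecomp : (b * D a) • E = ⁅D, (b * a) • E⁆ - ((b * a) • ⁅D, E⁆ + (a * D b) • E) := by
    rw [lie_smul_eq, leibniz, smul_eq_mul, smul_eq_mul, add_smul]
    abel
  rw [hdecomp]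
  refine M.sub_mem hlie (M.add_mem (hM ?_) (hM ?_))
  · exact smul_mem_idealStabilizer hba _
  · exact smul_mem_idealStabilizer (Ideal.mul_mem_right _ _ ha) _

end Derivation

namespace MvPolynomial

section Degree

variable {R σ : Type*} [CommSemiring R]

lemma totalDegree_pderiv_lt {i : σ} {p : MvPolynomial σ R} (h : pderiv i p ≠ 0) :
    (pderiv i p).totalDegree < p.totalDegree := by
  obtain ⟨m, hm, hdeg⟩ :=
    Finset.exists_mem_eq_sup _ (support_nonempty.2 h) fun m : σ →₀ ℕ => m.sum fun _ e => e
  have hcoeff : coeff (m + Finsupp.single i 1) p ≠ 0 := fun h0 =>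
    mem_support_iff.1 hm (by rw [coeff_pderiv, h0, zero_mul])
  calc (pderiv i p).totalDegree = m.sum fun _ e => e := hdeg
    _ < (m + Finsupp.single i 1).sum fun _ e => e := by
      rw [Finsupp.sum_add_index' (fun _ => rfl) (fun _ _ _ => rfl), Finsupp.sum_single_index rfl]
      exact Nat.lt_succ_self _
    _ ≤ p.totalDegree := le_totalDegree (mem_support_iff.2 hcoeff)

lemma exists_pderiv_ne_zero [NoZeroDivisors R] [CharZero R] {p : MvPolynomial σ R}
    (h : p.totalDegree ≠ 0) : ∃ i, pderiv i p ≠ 0 := by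
  obtain ⟨m, hm, i, hi⟩ : ∃ m ∈ p.support, ∃ i, m i ≠ 0 := by
    by_contra! hall
    exact h ((totalDegree_eq_zero_iff σ p).2 hall)
  refine ⟨i, fun h0 => ?_⟩
  have hle : Finsupp.single i 1 ≤ m := Finsupp.single_le_iff.2 (Nat.one_le_iff_ne_zero.2 hi)
  have hcoeff := coeff_pderiv (i := i) p (m - Finsupp.single i 1)
  rw [h0, coeff_zero, tsub_add_cancel_of_le hle, eq_comm, mul_eq_zero] at hcoeff
  refine hcoeff.elim (mem_support_iff.1 hm) fun hcast => ?_
  exact Nat.cast_add_one_ne_zero _ hcast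

end Degree

variable {R σ : Type*} [CommRing R]

lemma sub_rename_killCompl_mem {τ : Type*} {f : σ → τ} (hf : Function.Injective f)
    {J : Ideal (MvPolynomial τ R)} (hJ : ∀ i ∉ Set.range f, X i ∈ J) (p : MvPolynomial τ R) :
    p - rename f (killCompl hf p) ∈ J := by
  induction p using MvPolynomial.induction_on with
  | C a => simp
  | add p q hp hq => simpa only [map_add, add_sub_add_comm] using add_mem hp hq
  | mul_X p i hp =>
    have hXi : X i - rename f (killCompl hf (X i)) ∈ J := by
      by_cases hi : i ∈ Set.range f
      · obtain ⟨a, rfl⟩ := hi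
        rw [← rename_X f a, killCompl_rename_app, sub_self]
        exact zero_mem _
      · simpa [killCompl, hi] using hJ i hi
    have hsplit : p * X i - rename f (killCompl hf (p * X i)) =
        (p - rename f (killCompl hf p)) * X i + rename f (killCompl hf p) *
          (X i - rename f (killCompl hf (X i))) := by
      simp only [map_mul]; ring
    rw [hsplit]
    exact add_mem (Ideal.mul_mem_right _ _ hp) (Ideal.mul_mem_left _ _ hXi)

lemma pderiv_lie_pderiv (i j : σ) : ⁅pderiv (R := R) i, pderiv (R := R) j⁆ = 0 := by
  classical
  refine derivation_ext fun m => ?_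
  simp [Derivation.commutator_apply, pderiv_X, Pi.single_apply, apply_ite]

lemma pderiv_lie_smul_pderiv (i j : σ) (q : MvPolynomial σ R) :
    ⁅pderiv (R := R) i, q • pderiv (R := R) j⁆ = pderiv i q • pderiv j := by
  rw [Derivation.lie_smul_eq, pderiv_lie_pderiv, smul_zero, zero_add]

lemma eq_sum_smul_pderiv [Fintype σ] (D : Derivation R (MvPolynomial σ R) (MvPolynomial σ R)) :
    D = ∑ i, D (X i) • pderiv i := by
  classical
  refine derivation_ext fun j => ?_
  have hsum := map_sum (AddMonoidHom.mk'
    (fun E : Derivation R (MvPolynomial σ R) (MvPolynomial σ R) => E (X j)) fun _ _ => rfl)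
    (fun i => D (X i) • pderiv i) Finset.univ
  simp only [AddMonoidHom.mk'_apply] at hsum
  rw [hsum]
  simp [pderiv_X, Pi.single_apply]

section CharZero

variable {K σ : Type*} [Field K] [CharZero K]

lemma one_mem_of_forall_pderiv_mem {S : Submodule K (MvPolynomial σ K)}
    (hS : ∀ i, ∀ p ∈ S, pderiv i p ∈ S) {p : MvPolynomial σ K} (hp : p ∈ S) (hp0 : p ≠ 0) :
    (1 : MvPolynomial σ K) ∈ S := by
  induction hd : p.totalDegree using Nat.strong_induction_on generalizing p with
  | _ d ih =>
    by_cases hd0 : p.totalDegree = 0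
    · obtain ⟨c, rfl⟩ : ∃ c, p = C c := ⟨_, totalDegree_eq_zero_iff_eq_C.1 hd0⟩
      have hc : c ≠ 0 := fun hc => hp0 (by rw [hc, C_0])
      have := S.smul_mem c⁻¹ hp
      rwa [smul_eq_C_mul, ← C_mul, inv_mul_cancel₀ hc, C_1] at this
    · obtain ⟨i, hi⟩ := exists_pderiv_ne_zero hd0
      exact ih _ (hd ▸ totalDegree_pderiv_lt hi) (hS i p hp) hi rfl

end CharZero

section CoordinateIdeal

open Derivation

variable {K σ : Type*} [Field K] {s : Set σ}

lemma one_notMem_span_X_image :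
    (1 : MvPolynomial σ K) ∉ Ideal.span (X '' s : Set (MvPolynomial σ K)) := by
  have hker : Ideal.span (X '' s : Set (MvPolynomial σ K)) ≤
      RingHom.ker (constantCoeff (σ := σ) (R := K)) :=
    Ideal.span_le.2 <| by rintro _ ⟨i, -, rfl⟩; simp
  exact fun h => one_ne_zero (by simpa using hker h : (1 : K) = 0)

lemma smul_pderiv_mem_idealStabilizer {i : σ} (hi : i ∉ s) (f : MvPolynomial σ K) :
    f • pderiv i ∈ idealStabilizer K (Ideal.span (X '' s : Set (MvPolynomial σ K))) := by
  classical
  rw [mem_idealStabilizer_span_iff]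
  rintro _ ⟨m, hm, rfl⟩
  have hmi : m ≠ i := fun h => hi (h ▸ hm)
  simp [pderiv_X_of_ne hmi]

variable {M : LieSubalgebra K (Derivation K (MvPolynomial σ K) (MvPolynomial σ K))}

lemma pderiv_mem_of_smul_pderiv_mem [CharZero K]
    (hM : idealStabilizer K (Ideal.span (X '' s : Set (MvPolynomial σ K))) ≤ M)
    {q : MvPolynomial σ K} (hq : q ∉ Ideal.span (X '' s : Set (MvPolynomial σ K))) {j : σ}
    (hqM : q • pderiv j ∈ M) : pderiv j ∈ M := by
  have hval : Function.Injective (Subtype.val : ↥sᶜ → σ) := Subtype.val_injective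
  have hJ : ∀ i ∉ Set.range (Subtype.val : ↥sᶜ → σ),
      X i ∈ Ideal.span (X '' s : Set (MvPolynomial σ K)) := fun i hi =>
    Ideal.subset_span ⟨i, by simpa using hi, rfl⟩
  let S : Submodule K (MvPolynomial (↥sᶜ) K) :=
    M.toSubmodule.comap ((rename Subtype.val).toLinearMap.smulRight (pderiv j))
  have hmemS : ∀ p, p ∈ S ↔ rename Subtype.val p • pderiv j ∈ M := fun p => Iff.rfl
  have hS : ∀ i, ∀ p ∈ S, pderiv i p ∈ S := fun i p hp => by
    rw [hmemS, ← pderiv_rename hval, ← pderiv_lie_smul_pderiv]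
    refine M.lie_mem (hM ?_) hp
    simpa using smul_pderiv_mem_idealStabilizer (s := s) i.2 (1 : MvPolynomial σ K)
  have hkill : killCompl hval q ∈ S := by
    have hsub := sub_rename_killCompl_mem hval hJ q
    have hdecomp : rename Subtype.val (killCompl hval q) • pderiv (R := K) j =
        q • pderiv j - (q - rename Subtype.val (killCompl hval q)) • pderiv j := by
      ext x : 1
      simp only [Derivation.smul_apply, Derivation.sub_apply, smul_eq_mul]
      ring
    rw [hmemS, hdecomp]
    exact M.sub_mem hqM (hM (smul_mem_idealStabilizer hsub _))
  have hkill0 : killCompl hval q ≠ 0 := fun h0 =>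
    hq (by simpa [h0] using sub_rename_killCompl_mem hval hJ q)
  simpa [hmemS] using one_mem_of_forall_pderiv_mem hS hkill hkill0

lemma eq_top_of_pderiv_mem [Fintype σ]
    (hM : idealStabilizer K (Ideal.span (X '' s : Set (MvPolynomial σ K))) ≤ M)
    {j : σ} (hj : j ∈ s) (hjM : pderiv j ∈ M) : M = ⊤ := by
  have hsmul : ∀ i (f : MvPolynomial σ K), f • pderiv i ∈ M := fun i f => by
    by_cases hi : i ∈ s
    · simpa using mul_apply_smul_mem_of_idealStabilizer_le hM hjM
        (Ideal.subset_span ⟨j, hj, rfl⟩) f (pderiv i)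
    · exact hM (smul_pderiv_mem_idealStabilizer hi f)
  refine eq_top_iff.2 fun D _ => ?_
  rw [eq_sum_smul_pderiv D]
  exact sum_mem fun i _ => hsmul i _

theorem isCoatom_idealStabilizer_span_X [CharZero K] [Fintype σ] (hs : s.Nonempty) :
    IsCoatom (idealStabilizer K (Ideal.span (X '' s : Set (MvPolynomial σ K)))) := by
  obtain ⟨j, hj⟩ := hs
  refine ⟨fun htop => one_notMem_span_X_image (K := K) (s := s) ?_, fun M hlt => ?_⟩
  · have hj' : pderiv j ∈ idealStabilizer K (Ideal.span (X '' s : Set (MvPolynomial σ K))) :=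
      htop ▸ LieSubalgebra.mem_top _
    simpa using hj' (X j) (Ideal.subset_span ⟨j, hj, rfl⟩)
  obtain ⟨D, hDM, hDL⟩ := SetLike.exists_of_lt hlt
  obtain ⟨_, ⟨i, hi, rfl⟩, hDi⟩ :
      ∃ x ∈ X '' s, D x ∉ Ideal.span (X '' s : Set (MvPolynomial σ K)) := by
    simpa [mem_idealStabilizer_span_iff] using hDL
  have hDiM : D (X i) • pderiv i ∈ M := by
    simpa using mul_apply_smul_mem_of_idealStabilizer_le hlt.le hDM
      (Ideal.subset_span ⟨i, hi, rfl⟩) 1 (pderiv i)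
  exact eq_top_of_pderiv_mem hlt.le hi (pderiv_mem_of_smul_pderiv_mem hlt.le hDi hDiM)

end CoordinateIdeal

end MvPolynomial

theorem stabilizer_of_coordinate_ideal_is_maximal_general
    {K : Type} [Field K] [CharZero K] {n : ℕ}
    (k : ℕ) (hk2 : k < n)
    (I : Ideal (MvPolynomial (Fin n) K))
    (hI : I = Ideal.span {f : MvPolynomial (Fin n) K |
      ∃ i : Fin n, k ≤ (i : ℕ) ∧ f = MvPolynomial.X i}) :
    ∃ L : LieSubalgebra K (Wn K n),
      (L : Set (Wn K n)) = {D : Wn K n | ∀ f ∈ I, D f ∈ I} ∧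
      L ≠ ⊤ ∧
      ∀ M : LieSubalgebra K (Wn K n), L < M → M = ⊤ := by
  have hI' : I = Ideal.span (X '' {i : Fin n | k ≤ (i : ℕ)}) := by
    rw [hI]
    congr 1
    ext f
    simp [eq_comm]
  subst hI'
  obtain ⟨hne, hmax⟩ := isCoatom_idealStabilizer_span_X (K := K)
    (s := {i : Fin n | k ≤ (i : ℕ)}) ⟨⟨k, hk2⟩, le_refl k⟩
  exact ⟨_, rfl, hne, hmax⟩

/-- For `1 ≤ k ≤ n − 1`, the stabilizer `L_k = { D ∈ Wn : D(I_k) ⊆ I_k }` of the ideal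
`I_k = (x_{k+1}, …, x_n)` (generated by the last `n − k` variables) is a maximal Lie
subalgebra of `Wn`: a proper Lie subalgebra with no Lie subalgebra strictly between
it and `Wn`. -/
theorem stabilizer_of_coordinate_ideal_is_maximal
    {K : Type} [Field K] [IsAlgClosed K] [CharZero K] {n : ℕ}
    (k : ℕ) (hk1 : 1 ≤ k) (hk2 : k < n)
    (I : Ideal (MvPolynomial (Fin n) K))
    (hI : I = Ideal.span {f : MvPolynomial (Fin n) K |
      ∃ i : Fin n, k ≤ (i : ℕ) ∧ f = MvPolynomial.X i}) :
    ∃ L : LieSubalgebra K (Wn K n),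
      (L : Set (Wn K n)) = {D : Wn K n | ∀ f ∈ I, D f ∈ I} ∧
      L ≠ ⊤ ∧
      ∀ M : LieSubalgebra K (Wn K n), L < M → M = ⊤ :=
  stabilizer_of_coordinate_ideal_is_maximal_general k hk2 I hI
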